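/- Let (ξ_k)_{k≥1} be random functionals and f a function such that almost surely (1/n)·∑_{k=1}^n ξ_k(f̄)² → s for some s ∈ ℝ, (1/n)·∑_{k=1}^n ξ_k(1) → c > 0, (1/n)·∑_{k=1}^n ξ_k(1)² → c₂ < ∞, (1/n)·∑_{k=1}^n ξ_k(1)·ξ_k(f̄) → c₃ < ∞, where f̄ := f − μ and E_n(f) := (∑_{k≤n} ξ_k(f))/(∑_{k≤n} ξ_k(1)) → μ almost surely. Then n·v_n → s/c² almost surely, where v_n := [∑_{k=1}^n (ξ_k(f) − ξ_k(1)·E_n(f))²] / [∑_{j=1}^n ξ_j(1)]². -/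
import Mathlib


open MeasureTheory Filter

/-- Consistency of the IS variance estimator: if almost surely the normalised sums of
`ξ_k(f̄)²`, `ξ_k(1)`, `ξ_k(1)²` and `ξ_k(1)·ξ_k(f̄)` converge (with limit `c > 0` for the
weights) and `E_n(f) → μ`, then `n·v_n → s/c²` almost surely, where
`v_n = [∑ (ξ_k(f) − ξ_k(1)E_n(f))²]/[∑ ξ_j(1)]²` and `ξ_k(f̄) = ξ_k(f) − μ·ξ_k(1)`. -/
theorem variance_estimator_consistency
    {Ω : Type*} [MeasurableSpace Ω] (P : Measure Ω) [IsProbabilityMeasure P]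
    (ξf ξ1 : ℕ → Ω → ℝ) (μ s c c2 c3 : ℝ) (hc : 0 < c)
    (E : ℕ → Ω → ℝ)
    (hE : ∀ n ω, E n ω =
      (∑ k ∈ Finset.Icc 1 n, ξf k ω) / (∑ k ∈ Finset.Icc 1 n, ξ1 k ω))
    (v : ℕ → Ω → ℝ)
    (hv : ∀ n ω, v n ω =
      (∑ k ∈ Finset.Icc 1 n, (ξf k ω - ξ1 k ω * E n ω) ^ 2) /
        (∑ j ∈ Finset.Icc 1 n, ξ1 j ω) ^ 2)
    (hsq : ∀ᵐ ω ∂P, Tendsto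
      (fun n : ℕ => (∑ k ∈ Finset.Icc 1 n, (ξf k ω - μ * ξ1 k ω) ^ 2) / n)
      atTop (nhds s))
    (h1 : ∀ᵐ ω ∂P, Tendsto
      (fun n : ℕ => (∑ k ∈ Finset.Icc 1 n, ξ1 k ω) / n) atTop (nhds c))
    (h1sq : ∀ᵐ ω ∂P, Tendsto
      (fun n : ℕ => (∑ k ∈ Finset.Icc 1 n, (ξ1 k ω) ^ 2) / n) atTop (nhds c2))
    (hcross : ∀ᵐ ω ∂P, Tendsto
      (fun n : ℕ => (∑ k ∈ Finset.Icc 1 n, ξ1 k ω * (ξf k ω - μ * ξ1 k ω)) / n)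
      atTop (nhds c3))
    (hElim : ∀ᵐ ω ∂P, Tendsto (fun n : ℕ => E n ω) atTop (nhds μ)) :
    ∀ᵐ ω ∂P, Tendsto (fun n : ℕ => (n : ℝ) * v n ω) atTop (nhds (s / c ^ 2)) := by
  filter_upwards [hsq, h1, h1sq, hcross, hElim] with ω hsq h1 h1sq hcross hElim
  set A : ℕ → ℝ := fun n => ∑ k ∈ Finset.Icc 1 n, (ξf k ω - μ * ξ1 k ω) ^ 2 with hA
  set B : ℕ → ℝ := fun n => ∑ k ∈ Finset.Icc 1 n, ξ1 k ω with hB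
  set Q : ℕ → ℝ := fun n => ∑ k ∈ Finset.Icc 1 n, (ξ1 k ω) ^ 2 with hQ
  set C : ℕ → ℝ := fun n => ∑ k ∈ Finset.Icc 1 n, ξ1 k ω * (ξf k ω - μ * ξ1 k ω) with hC
  set D : ℕ → ℝ := fun n => μ - E n ω with hD
  have hDlim : Tendsto D atTop (nhds 0) := by
    have h := Tendsto.sub (tendsto_const_nhds : Tendsto (fun _ : ℕ => μ) atTop (nhds μ)) hElim
    simpa using h
  set N : ℕ → ℝ := fun n => ∑ k ∈ Finset.Icc 1 n, (ξf k ω - ξ1 k ω * E n ω) ^ 2 with hN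
  have hNid : ∀ n, N n = A n + 2 * D n * C n + (D n) ^ 2 * Q n := by
    intro n
    have : ∀ k ∈ Finset.Icc 1 n, (ξf k ω - ξ1 k ω * E n ω) ^ 2 =
        (ξf k ω - μ * ξ1 k ω) ^ 2 +
          2 * D n * (ξ1 k ω * (ξf k ω - μ * ξ1 k ω)) + (D n) ^ 2 * (ξ1 k ω) ^ 2 := by
      intro k _
      simp only [hD]
      ring
    simp only [hN, Finset.sum_congr rfl this, Finset.sum_add_distrib,
      ← Finset.mul_sum, hA, hB, hC, hQ]
  have hNlim : Tendsto (fun n => N n / n) atTop (nhds s) := by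
    have h : Tendsto (fun n : ℕ => A n / n + 2 * D n * (C n / n) + (D n) ^ 2 * (Q n / n))
        atTop (nhds (s + 2 * 0 * c3 + 0 ^ 2 * c2)) := by
      exact (hsq.add ((hDlim.const_mul 2).mul hcross)).add ((hDlim.pow 2).mul h1sq)
    have h' : (fun n : ℕ => A n / n + 2 * D n * (C n / n) + (D n) ^ 2 * (Q n / n)) =
        fun n : ℕ => N n / n := by
      funext n
      rw [hNid n]
      ring
    rw [h'] at h
    simpa using h
  have hmain : Tendsto (fun n : ℕ => (N n / n) / ((B n / n) ^ 2)) atTop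
      (nhds (s / c ^ 2)) := by
    exact hNlim.div (h1.pow 2) (by positivity)
  refine hmain.congr fun n => ?_
  rw [hv]
  rcases Nat.eq_zero_or_pos n with h0 | hpos
  · subst h0; simp [hN, hB]
  · have hn : (n : ℝ) ≠ 0 := Nat.cast_ne_zero.mpr hpos.ne'
    rcases eq_or_ne (B n) 0 with hb | hb
    · show N n / n / (B n / n) ^ 2 = (n : ℝ) * (N n / B n ^ 2)
      simp [hb]
    · show N n / n / (B n / n) ^ 2 = (n : ℝ) * (N n / B n ^ 2)
      field_simp
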